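/- Let ε̂(n) = 1 - b·e^{-a·w(n)} - c with a, b > 0 and w(n) = √(n/V)·(C - d/n)·ln 2 for d, V, C > 0. Then ε̂ is concave on (0,∞): ε̂''(n) = (∂²ε̂/∂w²)(w'(n))² + (∂ε̂/∂w)·w''(n) ≤ 0, since ∂²ε̂/∂w² = -a²b e^{-aw} < 0, ∂ε̂/∂w = ab e^{-aw} > 0, and w''(n) ≤ 0. -/

import Mathlib

/-! The normalized dispersion term is `w n = α √n - β / √n` with `α, β ≥ 0`, a sum of concave
functions of `n`, and `t ↦ 1 - b e^{-a t} - c` is concave and nondecreasing; a concave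
nondecreasing function of a concave function is concave. -/

open Real Set

noncomputable def wfun (d V C n : ℝ) : ℝ := Real.sqrt (n / V) * (C - d / n) * Real.log 2

theorem ConcaveOn.comp_of_monotone {𝕜 E F β : Type*} [Semiring 𝕜] [PartialOrder 𝕜]
    [AddCommMonoid E] [AddCommMonoid F] [PartialOrder F] [AddCommMonoid β] [PartialOrder β]
    [SMul 𝕜 E] [SMul 𝕜 F] [SMul 𝕜 β] {s : Set E} {f : E → F} {g : F → β}
    (hg : ConcaveOn 𝕜 univ g) (hg' : Monotone g) (hf : ConcaveOn 𝕜 s f) :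
    ConcaveOn 𝕜 s (g ∘ f) :=
  ⟨hf.1, fun _ hx _ hy _ _ ha hb hab =>
    (hg.2 trivial trivial ha hb hab).trans (hg' (hf.2 hx hy ha hb hab))⟩

lemma sqrt_image_Ioi_zero : sqrt '' Ioi 0 = Ioi 0 := by
  refine Subset.antisymm ?_ fun y (hy : 0 < y) => ⟨y ^ 2, pow_pos hy 2, sqrt_sq hy.le⟩
  rintro _ ⟨x, hx, rfl⟩
  exact sqrt_pos.2 hx

lemma concaveOn_sqrt_Ioi : ConcaveOn ℝ (Ioi 0) sqrt :=
  strictConcaveOn_sqrt.concaveOn.subset Ioi_subset_Ici_self (convex_Ioi 0)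

lemma convexOn_inv_sqrt : ConvexOn ℝ (Ioi 0) fun x => (√x)⁻¹ := by
  have hinv : ConvexOn ℝ (Ioi 0) fun x : ℝ => x⁻¹ := by
    simpa using convexOn_zpow (𝕜 := ℝ) (-1)
  refine ConvexOn.comp_concaveOn (g := fun x : ℝ => x⁻¹) ?_ concaveOn_sqrt_Ioi ?_ <;>
    rw [sqrt_image_Ioi_zero]
  · exact hinv
  · exact fun x hx _ _ hxy => inv_anti₀ hx hxy

lemma concaveOn_mul_sqrt_sub_div_sqrt {p q : ℝ} (hp : 0 ≤ p) (hq : 0 ≤ q) :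
    ConcaveOn ℝ (Ioi 0) fun x => p * √x - q / √x := by
  refine ((concaveOn_sqrt_Ioi.smul hp).sub (convexOn_inv_sqrt.smul hq)).congr fun x _ => ?_
  simp [div_eq_mul_inv]

lemma wfun_eq {d V C n : ℝ} (hV : 0 < V) (hn : 0 < n) :
    wfun d V C n = (C * log 2 / √V) * √n - (d * log 2 / √V) / √n := by
  rw [wfun, sqrt_div hn.le]
  field_simp
  rw [sq_sqrt hn.le]
  ring

lemma concaveOn_wfun {d V C : ℝ} (hd : 0 < d) (hV : 0 < V) (hC : 0 < C) :
    ConcaveOn ℝ (Ioi 0) (wfun d V C) := by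
  have hlog : 0 < log 2 := log_pos one_lt_two
  have hp : 0 ≤ C * log 2 / √V := by positivity
  have hq : 0 ≤ d * log 2 / √V := by positivity
  exact (concaveOn_mul_sqrt_sub_div_sqrt hp hq).congr fun n hn => (wfun_eq hV hn).symm

lemma convexOn_exp_neg_mul (a : ℝ) : ConvexOn ℝ univ fun x => exp (-(a * x)) := by
  simpa [Function.comp_def] using convexOn_exp.comp_linearMap (LinearMap.lsmul ℝ ℝ (-a))

lemma concaveOn_one_sub_mul_exp_neg_mul_sub (a c : ℝ) {b : ℝ} (hb : 0 ≤ b) :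
    ConcaveOn ℝ univ fun x => 1 - b * exp (-(a * x)) - c :=
  ((concaveOn_const 1 convex_univ).sub ((convexOn_exp_neg_mul a).smul hb)).sub
    (convexOn_const c convex_univ)

lemma monotone_one_sub_mul_exp_neg_mul_sub (c : ℝ) {a b : ℝ} (ha : 0 ≤ a) (hb : 0 ≤ b) :
    Monotone fun x => 1 - b * exp (-(a * x)) - c := by
  intro x y hxy
  dsimp only
  gcongr

theorem eps_hat_concave (a b c d V C : ℝ) (ha : 0 < a) (hb : 0 < b)
    (hd : 0 < d) (hV : 0 < V) (hC : 0 < C) :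
    ConcaveOn ℝ (Set.Ioi (0 : ℝ))
      (fun n : ℝ => 1 - b * Real.exp (-(a * wfun d V C n)) - c) :=
  (concaveOn_one_sub_mul_exp_neg_mul_sub a c hb.le).comp_of_monotone
    (monotone_one_sub_mul_exp_neg_mul_sub c ha.le hb.le) (concaveOn_wfun hd hV hC)
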